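/- arXiv:2111.12416 — 9 statements merged into one kernel-verified Lean document; each statement's English description precedes it below -/
import Mathlib

section
/- Let ε > 0, 0 < m < 2 and 0 < k < 2. The line L_a = {(x, −m·x − ε, x + m·ε) : x ∈ ℝ} is invariant under the vector field F₋(x,y,z) = (−m·x − y, x − z, ε): at every point p of L_a one has F₋(p) = ε·(1, −m, 1), a direction vector of L_a. Likewise the line L_r = {(x, k·x − ε, x − k·ε) : x ∈ ℝ} is invariant under F₊(x,y,z) = (k·x − y, x − z, ε): at every point p of L_r one has F₊(p) = ε·(1, k, 1). Moreover L_a meets the plane {x = 0} exactly at the point p^a = (0, −ε, m·ε), L_r meets it exactly at p^r = (0, −ε, −k·ε), and the Euclidean distance between p^a and p^r equals (m + k)·ε. -/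
/-- invariance of the canonical slow manifolds of the two-region PWL
slow-fast system, their intersections with the switching plane `{x = 0}`, and the
Euclidean distance between these intersection points. -/
theorem stmt0 (ε m k : ℝ) (hε : 0 < ε) (hm0 : 0 < m) (hm2 : m < 2)
    (hk0 : 0 < k) (hk2 : k < 2)
    (La Lr : Set (ℝ × ℝ × ℝ))
    (hLa : La = {p : ℝ × ℝ × ℝ | ∃ x : ℝ, p = (x, -m * x - ε, x + m * ε)})
    (hLr : Lr = {p : ℝ × ℝ × ℝ | ∃ x : ℝ, p = (x, k * x - ε, x - k * ε)})
    (Fm Fp : ℝ × ℝ × ℝ → ℝ × ℝ × ℝ)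
    (hFm : ∀ p : ℝ × ℝ × ℝ, Fm p = (-m * p.1 - p.2.1, p.1 - p.2.2, ε))
    (hFp : ∀ p : ℝ × ℝ × ℝ, Fp p = (k * p.1 - p.2.1, p.1 - p.2.2, ε)) :
    (∀ p ∈ La, Fm p = ε • ((1 : ℝ), -m, (1 : ℝ))) ∧
    (∀ p ∈ Lr, Fp p = ε • ((1 : ℝ), k, (1 : ℝ))) ∧
    {p ∈ La | p.1 = 0} = {((0 : ℝ), -ε, m * ε)} ∧
    {p ∈ Lr | p.1 = 0} = {((0 : ℝ), -ε, -(k * ε))} ∧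
    dist ((EuclideanSpace.equiv (Fin 3) ℝ).symm ![0, -ε, m * ε])
        ((EuclideanSpace.equiv (Fin 3) ℝ).symm ![0, -ε, -(k * ε)]) = (m + k) * ε := by
  subst hLa hLr
  refine ⟨?_, ?_, ?_, ?_, ?_⟩
  · rintro p ⟨x, rfl⟩
    rw [hFm]
    simp [Prod.ext_iff]
    and_intros <;> ring
  · rintro p ⟨x, rfl⟩
    rw [hFp]
    simp [Prod.ext_iff]
    and_intros <;> ring
  · ext p
    simp only [Set.mem_setOf_eq, Set.mem_singleton_iff]
    constructor
    · rintro ⟨⟨x, rfl⟩, hx⟩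
      simp at hx
      subst hx
      simp
    · rintro rfl
      exact ⟨⟨0, by norm_num⟩, rfl⟩
  · ext p
    simp only [Set.mem_setOf_eq, Set.mem_singleton_iff]
    constructor
    · rintro ⟨⟨x, rfl⟩, hx⟩
      simp at hx
      subst hx
      simp
    · rintro rfl
      exact ⟨⟨0, by norm_num⟩, rfl⟩
  · rw [EuclideanSpace.dist_eq]
    have h3 : ∀ f : Fin 3 → ℝ, ∑ i, f i = f 0 + f 1 + f 2 := by
      intro f; simp [Fin.sum_univ_three]
    rw [Fin.sum_univ_three]
    simp [Real.dist_eq, Real.sqrt_sq_eq_abs]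
    rw [abs_of_nonneg (by nlinarith)]
    ring
end

section
/- Let m, ε, x₀, y₀, z₀ be real numbers with 0 < m < 2, and set ξ_m = √(4 − m²)/2. Define z(t) = z₀ + ε·t and x_L(t) = z(t) − m·ε + e^{−(m/2)t}·[ (x₀ − z₀ + m·ε)·cos(ξ_m t) + ((−m·(z₀ − m·ε + x₀) − 2·(y₀ + ε))/√(4 − m²))·sin(ξ_m t) ], y_L(t) = −m·(z(t) − m·ε) − ε + e^{−(m/2)t}·[ (m·(z₀ − m·ε) + (y₀ + ε))·cos(ξ_m t) + ((m²·(z₀ − m·ε) + m·(y₀ + ε) + 2·(x₀ − z₀ + m·ε))/√(4 − m²))·sin(ξ_m t) ]. Then (x_L, y_L, z) satisfies x_L(0) = x₀, y_L(0) = y₀, z(0) = z₀, and for all t ∈ ℝ: x_L′(t) = −m·x_L(t) − y_L(t), y_L′(t) = x_L(t) − z(t), z′(t) = ε. -/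
/-!
The left-region system is linear with the affine forcing `z`, so its solutions are the
particular solution `x = z - m ε`, `y = -m (z - m ε) - ε` plus a solution of the homogeneous
system `X' = -m X - Y`, `Y' = X`. For `0 < m < 2` the latter has eigenvalues `-m/2 ± i ξ` with
`(m/2)² + ξ² = 1`, so its solutions are damped oscillations `e^{-(m/2) t} (A cos ξt + B sin ξt)`;
the coefficients in `x_L` are those forced by the coefficients in `y_L` through `Y' = X`.
-/

open Real

noncomputable def dampedOsc (a ξ A B t : ℝ) : ℝ :=
  exp (-a * t) * (A * cos (ξ * t) + B * sin (ξ * t))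

theorem hasDerivAt_dampedOsc (a ξ A B t : ℝ) :
    HasDerivAt (dampedOsc a ξ A B) (dampedOsc a ξ (-a * A + ξ * B) (-a * B - ξ * A) t) t := by
  have he : HasDerivAt (fun t => exp (-a * t)) (exp (-a * t) * -a) t := by
    simpa using ((hasDerivAt_id t).const_mul (-a)).exp
  have hc : HasDerivAt (fun t => cos (ξ * t)) (-sin (ξ * t) * ξ) t := by
    simpa using ((hasDerivAt_id t).const_mul ξ).cos
  have hs : HasDerivAt (fun t => sin (ξ * t)) (cos (ξ * t) * ξ) t := by
    simpa using ((hasDerivAt_id t).const_mul ξ).sin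
  refine (he.mul ((hc.const_mul A).add (hs.const_mul B))).congr_deriv ?_
  simp only [dampedOsc, Pi.add_apply]
  ring

theorem hasDerivAt_dampedOsc_homogeneous {m ξ : ℝ} (hξ : (m / 2) ^ 2 + ξ ^ 2 = 1)
    (C D t : ℝ) :
    HasDerivAt (dampedOsc (m / 2) ξ (-(m / 2) * C + ξ * D) (-(m / 2) * D - ξ * C))
        (-m * dampedOsc (m / 2) ξ (-(m / 2) * C + ξ * D) (-(m / 2) * D - ξ * C) t -
          dampedOsc (m / 2) ξ C D t) t ∧
      HasDerivAt (dampedOsc (m / 2) ξ C D)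
        (dampedOsc (m / 2) ξ (-(m / 2) * C + ξ * D) (-(m / 2) * D - ξ * C) t) t := by
  refine ⟨(hasDerivAt_dampedOsc _ _ _ _ t).congr_deriv ?_, hasDerivAt_dampedOsc _ _ _ _ t⟩
  unfold dampedOsc
  linear_combination -exp (-(m / 2) * t) * (C * cos (ξ * t) + D * sin (ξ * t)) * hξ

theorem hasDerivAt_forced_of_homogeneous {m ε t : ℝ} {z X Y : ℝ → ℝ}
    (hz : HasDerivAt z ε t) (hX : HasDerivAt X (-m * X t - Y t) t)
    (hY : HasDerivAt Y (X t) t) :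
    HasDerivAt (fun t => z t - m * ε + X t)
        (-m * (z t - m * ε + X t) - (-m * (z t - m * ε) - ε + Y t)) t ∧
      HasDerivAt (fun t => -m * (z t - m * ε) - ε + Y t) (z t - m * ε + X t - z t) t := by
  constructor
  · exact ((hz.sub_const _).add hX).congr_deriv (by ring)
  · exact ((((hz.sub_const _).const_mul (-m)).sub_const ε).add hY).congr_deriv (by ring)

/-- the explicit expressions `(x_L, y_L, z)` solve the left-region
linear system `x' = -m·x - y`, `y' = x - z`, `z' = ε` with initial condition
`(x₀, y₀, z₀)`. -/
theorem stmt2 (m ε x₀ y₀ z₀ : ℝ) (hm0 : 0 < m) (hm2 : m < 2)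
    (ξ : ℝ) (hξ : ξ = Real.sqrt (4 - m ^ 2) / 2)
    (z xL yL : ℝ → ℝ)
    (hz : ∀ t, z t = z₀ + ε * t)
    (hx : ∀ t, xL t = z t - m * ε +
      Real.exp (-(m / 2) * t) *
        ((x₀ - z₀ + m * ε) * Real.cos (ξ * t) +
          ((-m * (z₀ - m * ε + x₀) - 2 * (y₀ + ε)) / Real.sqrt (4 - m ^ 2)) *
            Real.sin (ξ * t)))
    (hy : ∀ t, yL t = -m * (z t - m * ε) - ε +
      Real.exp (-(m / 2) * t) *
        ((m * (z₀ - m * ε) + (y₀ + ε)) * Real.cos (ξ * t) +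
          ((m ^ 2 * (z₀ - m * ε) + m * (y₀ + ε) + 2 * (x₀ - z₀ + m * ε)) /
              Real.sqrt (4 - m ^ 2)) *
            Real.sin (ξ * t))) :
    xL 0 = x₀ ∧ yL 0 = y₀ ∧ z 0 = z₀ ∧
    ∀ t : ℝ,
      HasDerivAt xL (-m * xL t - yL t) t ∧
      HasDerivAt yL (xL t - z t) t ∧
      HasDerivAt z ε t := by
  set s := Real.sqrt (4 - m ^ 2)
  have h4 : 0 < 4 - m ^ 2 := by nlinarith
  have hs2 : s ^ 2 = 4 - m ^ 2 := Real.sq_sqrt h4.le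
  have hs : s ≠ 0 := (Real.sqrt_pos.mpr h4).ne'
  have hξ1 : (m / 2) ^ 2 + ξ ^ 2 = 1 := by rw [hξ]; linear_combination hs2 / 4
  set C := m * (z₀ - m * ε) + (y₀ + ε)
  set D := (m ^ 2 * (z₀ - m * ε) + m * (y₀ + ε) + 2 * (x₀ - z₀ + m * ε)) / s
  have hA : x₀ - z₀ + m * ε = -(m / 2) * C + ξ * D := by
    rw [hξ]; simp only [C, D]; field_simp; ring
  have hB : (-m * (z₀ - m * ε + x₀) - 2 * (y₀ + ε)) / s = -(m / 2) * D - ξ * C := by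
    rw [hξ]; simp only [C, D]; field_simp; linear_combination C * hs2
  have hxL : xL = fun t => z t - m * ε +
      dampedOsc (m / 2) ξ (-(m / 2) * C + ξ * D) (-(m / 2) * D - ξ * C) t := by
    ext t; rw [hx, hA, hB]; rfl
  have hyL : yL = fun t => -m * (z t - m * ε) - ε + dampedOsc (m / 2) ξ C D t := by
    ext t; rw [hy]; rfl
  have hzd (t : ℝ) : HasDerivAt z ε t := by
    rw [show z = fun t => z₀ + ε * t from funext hz]
    simpa using ((hasDerivAt_id t).const_mul ε).const_add z₀
  refine ⟨by simp [hx, hz], by simp [hy, hz, C]; ring, by simp [hz], fun t => ?_⟩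
  obtain ⟨hX, hY⟩ := hasDerivAt_dampedOsc_homogeneous hξ1 C D t
  obtain ⟨hx', hy'⟩ := hasDerivAt_forced_of_homogeneous (hzd t) hX hY
  rw [hxL, hyL]
  exact ⟨hx', hy', hzd t⟩
end

section
/- Let 0 < k < 2 and ε be real, and let x, y, z : ℝ → ℝ be differentiable functions satisfying x′ = k·x − y, y′ = x − z, z′ = ε. Define D(t) = (x(t) − z(t) − k·ε)² + (y(t) − k·z(t) − k²·ε + ε)². Then there exist ϑ ≥ 0 and φ ∈ ℝ such that for all t ∈ ℝ, D(t) = ϑ²·e^{k·t}·(1 + (k/2)·cos(√(4 − k²)·t + φ)). In particular, (1 − k/2)·ϑ²·e^{k·t} ≤ D(t) ≤ (1 + k/2)·ϑ²·e^{k·t} for all t, and if D(0) > 0 then ϑ > 0 and ((1 − k/2)/(1 + k/2))·e^{k·t}·D(0) ≤ D(t) ≤ ((1 + k/2)/(1 − k/2))·e^{k·t}·D(0) for all t. -/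
/-!
In the offsets `u = x - z - k ε`, `v = y - k z - k² ε + ε` from the slow manifold the system
becomes the planar linear system `u' = k u - v`, `v' = u`, whose eigenvalues are
`ζ = k/2 ± i ω` with `ω = √(4 - k²)/2`, so `|ζ| = 1`. The complex coordinate `w = v - ζ u`
satisfies `w' = ζ w`, hence `w(t) = e^{ζ t} w(0)`, and
`ω² (u² + v²) = |w|² - (k/2) Re (ζ̄ w²)`. Both terms scale by `e^{k t}`; the second one also
rotates by the angle `2 ω t`, which produces the factor `1 + (k/2) cos (√(4 - k²) t + φ)`.
-/

open Complex ComplexConjugate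

theorem eq_cexp_mul_of_hasDerivAt {w : ℝ → ℂ} {ζ : ℂ} (hw : ∀ t, HasDerivAt w (ζ * w t) t)
    (t : ℝ) : w t = cexp (ζ * t) * w 0 := by
  have hconst : ∀ s, HasDerivAt (fun s : ℝ => cexp (-ζ * s) * w s) 0 s := by
    intro s
    have hexp := (((hasDerivAt_id s).ofReal_comp).const_mul (-ζ)).cexp
    refine (hexp.mul (hw s)).congr_deriv ?_
    simp only [id, ofReal_one]
    ring
  have h := is_const_of_deriv_eq_zero (fun s => (hconst s).differentiableAt)
    (fun s => (hconst s).deriv) t 0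
  simp only [ofReal_zero, mul_zero, exp_zero, one_mul] at h
  rw [← h, ← mul_assoc, ← exp_add]
  simp

theorem re_cexp_ofReal_mul_I_mul (c : ℂ) (θ : ℝ) :
    (cexp (θ * I) * c).re = ‖c‖ * Real.cos (θ + arg c) := by
  conv_lhs => rw [← norm_mul_exp_arg_mul_I c]
  rw [mul_left_comm, ← exp_add, ← add_mul, ← ofReal_add, re_ofReal_mul, exp_ofReal_mul_I_re]

theorem normSq_cexp_mul (ζ w : ℂ) (t : ℝ) :
    normSq (cexp (ζ * t) * w) = Real.exp (2 * ζ.re * t) * normSq w := by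
  rw [normSq_mul, normSq_eq_norm_sq (cexp _), norm_exp, ← Real.exp_nat_mul]
  simp only [mul_re, ofReal_re, ofReal_im, mul_zero, sub_zero, Nat.cast_ofNat]
  ring_nf

theorem re_mul_sq_cexp_mul (c ζ w : ℂ) (t : ℝ) :
    (c * (cexp (ζ * t) * w) ^ 2).re =
      Real.exp (2 * ζ.re * t) * (‖c * w ^ 2‖ * Real.cos (2 * ζ.im * t + arg (c * w ^ 2))) := by
  have hsplit : 2 * (ζ * t) = (2 * ζ.re * t : ℝ) + (2 * ζ.im * t : ℝ) * I := by
    push_cast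
    linear_combination (-2 * t : ℂ) * re_add_im ζ
  rw [mul_pow, ← exp_nat_mul, Nat.cast_ofNat, hsplit, exp_add, ← ofReal_exp, mul_left_comm,
    mul_assoc, re_ofReal_mul, re_cexp_ofReal_mul_I_mul]

theorem im_sq_mul_sq_add_sq {ζ : ℂ} (hζ : normSq ζ = 1) (u v : ℝ) :
    ζ.im ^ 2 * (u ^ 2 + v ^ 2) =
      normSq (v - ζ * u) - ζ.re * (conj ζ * (v - ζ * u) ^ 2).re := by
  rw [normSq_apply] at hζ
  simp only [normSq_apply, pow_two, sub_re, sub_im, mul_re, mul_im, ofReal_re, ofReal_im, conj_re,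
    conj_im]
  linear_combination (v - ζ.re * u) ^ 2 * hζ

theorem hasDerivAt_sub_mul_of_hasDerivAt {k : ℝ} {ζ : ℂ} (hζ : ζ ^ 2 - k * ζ + 1 = 0)
    {u v : ℝ → ℝ} (hu : ∀ t, HasDerivAt u (k * u t - v t) t) (hv : ∀ t, HasDerivAt v (u t) t)
    (t : ℝ) : HasDerivAt (fun t => (v t : ℂ) - ζ * u t) (ζ * (v t - ζ * u t)) t := by
  refine ((hv t).ofReal_comp.sub ((hu t).ofReal_comp.const_mul ζ)).congr_deriv ?_
  push_cast
  linear_combination (u t : ℂ) * hζ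

theorem im_sq_mul_sq_add_sq_of_eq_cexp_mul {ζ w₀ : ℂ} (hζ : normSq ζ = 1) {u v t : ℝ}
    (hw : (v : ℂ) - ζ * u = cexp (ζ * t) * w₀) :
    ζ.im ^ 2 * (u ^ 2 + v ^ 2) = Real.exp (2 * ζ.re * t) * ‖w₀‖ ^ 2 *
      (1 + ζ.re * Real.cos (2 * ζ.im * t + arg (-conj ζ * w₀ ^ 2))) := by
  have hnorm : ‖-conj ζ * w₀ ^ 2‖ = ‖w₀‖ ^ 2 := by
    rw [norm_mul, norm_neg, RCLike.norm_conj, norm_def, hζ, Real.sqrt_one, one_mul, norm_pow]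
  have hrot := re_mul_sq_cexp_mul (-conj ζ) ζ w₀ t
  rw [neg_mul, neg_re, hnorm] at hrot
  rw [im_sq_mul_sq_add_sq hζ, hw, normSq_cexp_mul, ← neg_neg (conj ζ * _).re, hrot,
    normSq_eq_norm_sq]
  ring

theorem exists_sq_add_sq_eq_exp_mul {k : ℝ} (hk : k ^ 2 < 4) {u v : ℝ → ℝ}
    (hu : ∀ t, HasDerivAt u (k * u t - v t) t) (hv : ∀ t, HasDerivAt v (u t) t) :
    ∃ ϑ φ : ℝ, 0 ≤ ϑ ∧ ∀ t, u t ^ 2 + v t ^ 2 =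
      ϑ ^ 2 * Real.exp (k * t) * (1 + k / 2 * Real.cos (Real.sqrt (4 - k ^ 2) * t + φ)) := by
  set ω := Real.sqrt (4 - k ^ 2) / 2 with hω_def
  have hω : 0 < ω := by positivity
  have hω_sq : ω ^ 2 = 1 - (k / 2) ^ 2 := by
    rw [hω_def, div_pow, Real.sq_sqrt (by linarith)]; ring
  have h2ω : 2 * ω = Real.sqrt (4 - k ^ 2) := by rw [hω_def]; ring
  clear_value ω
  set ζ : ℂ := ⟨k / 2, ω⟩
  have hζ_normSq : normSq ζ = 1 := by rw [normSq_mk]; linear_combination hω_sq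
  have hζ_char : ζ ^ 2 - k * ζ + 1 = 0 := by
    apply Complex.ext
    · simp only [pow_two, add_re, sub_re, mul_re, ofReal_re, ofReal_im, zero_mul, sub_zero,
        one_re, zero_re, ζ]
      linear_combination -hω_sq
    · simp only [pow_two, add_im, sub_im, mul_im, ofReal_re, ofReal_im, zero_mul, add_zero,
        one_im, zero_im, ζ]
      ring
  set w₀ := (v 0 : ℂ) - ζ * u 0
  have hw : ∀ t, (v t : ℂ) - ζ * u t = cexp (ζ * t) * w₀ :=
    eq_cexp_mul_of_hasDerivAt (hasDerivAt_sub_mul_of_hasDerivAt hζ_char hu hv)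
  refine ⟨‖w₀‖ / ω, arg (-conj ζ * w₀ ^ 2), by positivity, fun t => ?_⟩
  have key := im_sq_mul_sq_add_sq_of_eq_cexp_mul hζ_normSq (hw t)
  change ω ^ 2 * _ = Real.exp (2 * (k / 2) * t) * _ * (1 + k / 2 * Real.cos (2 * ω * t + _))
    at key
  apply mul_left_cancel₀ (pow_ne_zero 2 hω.ne')
  rw [key, h2ω, div_pow]
  field_simp

theorem one_sub_mul_le_mul_one_add_mul_cos {a M : ℝ} (ha : 0 ≤ a) (hM : 0 ≤ M) (θ : ℝ) :
    (1 - a) * M ≤ M * (1 + a * Real.cos θ) ∧ M * (1 + a * Real.cos θ) ≤ (1 + a) * M := by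
  have h₁ := Real.neg_one_le_cos θ
  have h₂ := Real.cos_le_one θ
  constructor <;> nlinarith [mul_nonneg ha hM]

theorem ratio_bounds_of_two_sided_bounds {a M E d₀ d : ℝ} (ha₀ : 0 ≤ a) (ha₁ : a < 1)
    (hE : 0 ≤ E) (h₀ : (1 - a) * M ≤ d₀ ∧ d₀ ≤ (1 + a) * M)
    (h : (1 - a) * M * E ≤ d ∧ d ≤ (1 + a) * M * E) :
    (1 - a) / (1 + a) * E * d₀ ≤ d ∧ d ≤ (1 + a) / (1 - a) * E * d₀ := by
  have hpos : 0 < 1 + a := by linarith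
  have hneg : 0 < 1 - a := by linarith
  constructor
  · calc (1 - a) / (1 + a) * E * d₀ ≤ (1 - a) / (1 + a) * E * ((1 + a) * M) := by
          gcongr
          exact h₀.2
      _ = (1 - a) * M * E := by field_simp
      _ ≤ d := h.1
  · calc d ≤ (1 + a) * M * E := h.2
      _ = (1 + a) / (1 - a) * E * ((1 - a) * M) := by field_simp
      _ ≤ (1 + a) / (1 - a) * E * d₀ := by
          gcongr
          exact h₀.1

/-- the squared distance from a solution of the right-region system to
the canonical repelling slow manifold grows like `ϑ²·e^{k·t}` modulated by a bounded
oscillatory factor. -/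
theorem stmt5 (k ε : ℝ) (hk0 : 0 < k) (hk2 : k < 2)
    (x y z : ℝ → ℝ)
    (hx : ∀ t, HasDerivAt x (k * x t - y t) t)
    (hy : ∀ t, HasDerivAt y (x t - z t) t)
    (hz : ∀ t, HasDerivAt z ε t)
    (D : ℝ → ℝ)
    (hD : ∀ t, D t = (x t - z t - k * ε) ^ 2 + (y t - k * z t - k ^ 2 * ε + ε) ^ 2) :
    ∃ ϑ φ : ℝ, 0 ≤ ϑ ∧
      (∀ t : ℝ, D t =
        ϑ ^ 2 * Real.exp (k * t) * (1 + (k / 2) * Real.cos (Real.sqrt (4 - k ^ 2) * t + φ))) ∧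
      (∀ t : ℝ,
        (1 - k / 2) * ϑ ^ 2 * Real.exp (k * t) ≤ D t ∧
        D t ≤ (1 + k / 2) * ϑ ^ 2 * Real.exp (k * t)) ∧
      (0 < D 0 → 0 < ϑ ∧
        ∀ t : ℝ,
          ((1 - k / 2) / (1 + k / 2)) * Real.exp (k * t) * D 0 ≤ D t ∧
          D t ≤ ((1 + k / 2) / (1 - k / 2)) * Real.exp (k * t) * D 0) := by
  have hu : ∀ t, HasDerivAt (fun t => x t - z t - k * ε)
      (k * (x t - z t - k * ε) - (y t - k * z t - k ^ 2 * ε + ε)) t := fun t =>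
    (((hx t).sub (hz t)).sub_const _).congr_deriv (by ring)
  have hv : ∀ t, HasDerivAt (fun t => y t - k * z t - k ^ 2 * ε + ε) (x t - z t - k * ε) t :=
    fun t => ((((hy t).sub ((hz t).const_mul k)).sub_const _).add_const ε).congr_deriv (by ring)
  obtain ⟨ϑ, φ, hϑ, hform⟩ := exists_sq_add_sq_eq_exp_mul (by nlinarith) hu hv
  have hD_eq : ∀ t, D t =
      ϑ ^ 2 * Real.exp (k * t) * (1 + k / 2 * Real.cos (Real.sqrt (4 - k ^ 2) * t + φ)) :=
    fun t => (hD t).trans (hform t)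
  have hD_bounds : ∀ t, (1 - k / 2) * ϑ ^ 2 * Real.exp (k * t) ≤ D t ∧
      D t ≤ (1 + k / 2) * ϑ ^ 2 * Real.exp (k * t) := fun t => by
    simpa only [hD_eq t, mul_assoc] using one_sub_mul_le_mul_one_add_mul_cos (by positivity)
      (by positivity : 0 ≤ ϑ ^ 2 * Real.exp (k * t)) (Real.sqrt (4 - k ^ 2) * t + φ)
  have hD₀_bounds : (1 - k / 2) * ϑ ^ 2 ≤ D 0 ∧ D 0 ≤ (1 + k / 2) * ϑ ^ 2 := by
    simpa only [mul_zero, Real.exp_zero, mul_one] using hD_bounds 0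
  refine ⟨ϑ, φ, hϑ, hD_eq, hD_bounds, fun hD₀ => ⟨?_, fun t =>
    ratio_bounds_of_two_sided_bounds (by positivity) (by linarith) (Real.exp_pos _).le
      hD₀_bounds (hD_bounds t)⟩⟩
  refine hϑ.lt_of_ne ?_
  rintro rfl
  linarith [hD₀_bounds.2]
end

section
/- Let 0 < m < 2 and ε be real, and let x, y, z : ℝ → ℝ be differentiable functions satisfying x′ = −m·x − y, y′ = x − z, z′ = ε. Define D(t) = (x(t) − z(t) + m·ε)² + (y(t) + m·(z(t) − m·ε) + ε)². Then there exist ϑ ≥ 0 and φ ∈ ℝ such that for all t ∈ ℝ, D(t) = ϑ²·e^{−m·t}·(1 + (m/2)·cos(√(4 − m²)·t + φ)). In particular, (1 − m/2)·ϑ²·e^{−m·t} ≤ D(t) ≤ (1 + m/2)·ϑ²·e^{−m·t} for all t. -/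
/-!
Put `u = x - z + m ε`, `v = y + m (z - m ε) + ε`, so that `u' = -m u - v`, `v' = u` and
`D = u² + v²`. With `s = √(4 - m²)`, the quadratic forms
`p = -e^{mt} (m u² + 4 u v + m v²)` and `q = e^{mt} s (u² - v²)` satisfy `p' = -s q`, `q' = s p`,
so `(p, q) = r (cos (s t + φ), sin (s t + φ))`. The quartic identity
`(m u² + 4 u v + m v²)² + s² (u² - v²)² = 4 (u² + m u v + v²)²` identifies `r` with
`2 e^{mt} (u² + m u v + v²)`, and `s² (u² + v²) = 4 (u² + m u v + v²) - m (m u² + 4 u v + m v²)`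
then gives `s² e^{mt} D = r (2 + m cos (s t + φ))`.
-/

open Complex in
theorem exists_polar_of_hasDerivAt_rotation {p q : ℝ → ℝ} {s : ℝ}
    (hp : ∀ t, HasDerivAt p (-(s * q t)) t) (hq : ∀ t, HasDerivAt q (s * p t) t) :
    ∃ r φ : ℝ, 0 ≤ r ∧
      ∀ t, p t = r * Real.cos (s * t + φ) ∧ q t = r * Real.sin (s * t + φ) := by
  set w : ℝ → ℂ := fun t => p t + q t * I
  have hw : ∀ t, HasDerivAt w (s * I * w t) t := fun t => by
    refine ((hp t).ofReal_comp.add ((hq t).ofReal_comp.mul_const I)).congr_deriv ?_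
    push_cast
    linear_combination -(s * q t : ℂ) * I_sq
  have hE : ∀ t : ℝ, HasDerivAt (fun t : ℝ => exp (-(s * t * I))) (exp (-(s * t * I)) * -(s * I)) t :=
    fun t => by
      convert ((hasDerivAt_id t).ofReal_comp.const_mul (-(s * I : ℂ))).cexp using 1
      · ext t; simp only [id]; ring_nf
      · simp only [id, ofReal_one]; ring_nf
  have hconst : ∀ t, w t * exp (-(s * t * I)) = w 0 := fun t => by
    have hd : ∀ t, HasDerivAt (fun t => w t * exp (-(s * t * I))) 0 t := fun t =>
      ((hw t).mul (hE t)).congr_deriv (by ring)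
    simpa using is_const_of_deriv_eq_zero (fun t => (hd t).differentiableAt) (fun t => (hd t).deriv) t 0
  refine ⟨‖w 0‖, arg (w 0), norm_nonneg _, fun t => ?_⟩
  have hwt : w t = ‖w 0‖ * exp ((s * t + arg (w 0) : ℝ) * I) := by
    have : w t = w 0 * exp (s * t * I) := by
      rw [← hconst t, mul_assoc, ← Complex.exp_add]; simp
    rw [this]
    nth_rewrite 1 [← norm_mul_exp_arg_mul_I (w 0)]
    rw [mul_assoc, ← Complex.exp_add]; push_cast; ring_nf
  constructor
  · simpa [w, -ofReal_add] using congrArg re hwt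
  · simpa [w, -ofReal_add] using congrArg im hwt

section LeftRegion

variable {m s : ℝ} {u v : ℝ → ℝ}

theorem hasDerivAt_exp_mul_neg_cross_form (hs : s ^ 2 = 4 - m ^ 2)
    (hu : ∀ t, HasDerivAt u (-m * u t - v t) t) (hv : ∀ t, HasDerivAt v (u t) t) (t : ℝ) :
    HasDerivAt (fun t => Real.exp (m * t) * -(m * u t ^ 2 + 4 * u t * v t + m * v t ^ 2))
      (-(s * (Real.exp (m * t) * (s * (u t ^ 2 - v t ^ 2))))) t := by
  have hE := ((hasDerivAt_id t).const_mul m).exp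
  refine (hE.mul ((((hu t).pow 2).const_mul m).add
    ((((hu t).const_mul 4).mul (hv t))) |>.add (((hv t).pow 2).const_mul m)).neg).congr_deriv ?_
  simp only [id, Pi.add_apply, Pi.mul_apply, Pi.neg_apply, Pi.pow_apply]
  linear_combination (Real.exp (m * t) * (u t ^ 2 - v t ^ 2)) * hs

theorem hasDerivAt_exp_mul_sq_sub_sq
    (hu : ∀ t, HasDerivAt u (-m * u t - v t) t) (hv : ∀ t, HasDerivAt v (u t) t) (t : ℝ) :
    HasDerivAt (fun t => Real.exp (m * t) * (s * (u t ^ 2 - v t ^ 2)))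
      (s * (Real.exp (m * t) * -(m * u t ^ 2 + 4 * u t * v t + m * v t ^ 2))) t := by
  have hE := ((hasDerivAt_id t).const_mul m).exp
  refine (hE.mul ((((hu t).pow 2).sub ((hv t).pow 2)).const_mul s)).congr_deriv ?_
  simp only [id, Pi.sub_apply, Pi.pow_apply]
  ring

theorem cross_form_sq_add_sq_eq (hs : s ^ 2 = 4 - m ^ 2) (a b : ℝ) :
    (m * a ^ 2 + 4 * a * b + m * b ^ 2) ^ 2 + (s * (a ^ 2 - b ^ 2)) ^ 2
      = (2 * (a ^ 2 + m * a * b + b ^ 2)) ^ 2 := by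
  linear_combination (a ^ 2 - b ^ 2) ^ 2 * hs

theorem exists_sq_add_sq_eq_exp_mul_cos (hm : m ^ 2 < 4)
    (hu : ∀ t, HasDerivAt u (-m * u t - v t) t) (hv : ∀ t, HasDerivAt v (u t) t) :
    ∃ ϑ φ : ℝ, 0 ≤ ϑ ∧ ∀ t, u t ^ 2 + v t ^ 2 =
      ϑ ^ 2 * Real.exp (-m * t) * (1 + m / 2 * Real.cos (Real.sqrt (4 - m ^ 2) * t + φ)) := by
  set s := Real.sqrt (4 - m ^ 2)
  have hs : s ^ 2 = 4 - m ^ 2 := Real.sq_sqrt (by linarith)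
  have hs0 : 0 < s := Real.sqrt_pos.2 (by linarith)
  obtain ⟨r, φ, hr, hpq⟩ := exists_polar_of_hasDerivAt_rotation
    (hasDerivAt_exp_mul_neg_cross_form hs hu hv) (hasDerivAt_exp_mul_sq_sub_sq hu hv)
  have hamp : ∀ t, 2 * (Real.exp (m * t) * (u t ^ 2 + m * u t * v t + v t ^ 2)) = r := fun t => by
    have hQ : 0 ≤ u t ^ 2 + m * u t * v t + v t ^ 2 := by
      nlinarith [sq_nonneg (2 * u t + m * v t), sq_nonneg (v t)]
    refine (pow_left_inj₀ (by positivity) hr two_ne_zero).1 ?_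
    obtain ⟨hp, hq⟩ := hpq t
    calc (2 * (Real.exp (m * t) * (u t ^ 2 + m * u t * v t + v t ^ 2))) ^ 2
        = Real.exp (m * t) ^ 2 * (2 * (u t ^ 2 + m * u t * v t + v t ^ 2)) ^ 2 := by ring
      _ = (Real.exp (m * t) * -(m * u t ^ 2 + 4 * u t * v t + m * v t ^ 2)) ^ 2
          + (Real.exp (m * t) * (s * (u t ^ 2 - v t ^ 2))) ^ 2 := by
        rw [← cross_form_sq_add_sq_eq hs]; ring
      _ = r ^ 2 := by rw [hp, hq]; linear_combination r ^ 2 * Real.sin_sq_add_cos_sq (s * t + φ)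
  refine ⟨Real.sqrt (2 * r) / s, φ, by positivity, fun t => ?_⟩
  rw [div_pow, Real.sq_sqrt (by positivity), hs, neg_mul, Real.exp_neg]
  field_simp
  rw [eq_div_iff (by linarith)]
  linear_combination (norm := ring_nf) 2 * hamp t + m * (hpq t).1

end LeftRegion

/-- the squared distance from a solution of the left-region system to
the canonical attracting slow manifold decays like `ϑ²·e^{-m·t}` modulated by a
bounded oscillatory factor. -/
theorem stmt6 (m ε : ℝ) (hm0 : 0 < m) (hm2 : m < 2)
    (x y z : ℝ → ℝ)
    (hx : ∀ t, HasDerivAt x (-m * x t - y t) t)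
    (hy : ∀ t, HasDerivAt y (x t - z t) t)
    (hz : ∀ t, HasDerivAt z ε t)
    (D : ℝ → ℝ)
    (hD : ∀ t, D t = (x t - z t + m * ε) ^ 2 + (y t + m * (z t - m * ε) + ε) ^ 2) :
    ∃ ϑ φ : ℝ, 0 ≤ ϑ ∧
      (∀ t : ℝ, D t =
        ϑ ^ 2 * Real.exp (-m * t) * (1 + (m / 2) * Real.cos (Real.sqrt (4 - m ^ 2) * t + φ))) ∧
      (∀ t : ℝ,
        (1 - m / 2) * ϑ ^ 2 * Real.exp (-m * t) ≤ D t ∧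
        D t ≤ (1 + m / 2) * ϑ ^ 2 * Real.exp (-m * t)) := by
  obtain ⟨ϑ, φ, hϑ, hsol⟩ := exists_sq_add_sq_eq_exp_mul_cos (by nlinarith)
    (u := fun t => x t - z t + m * ε) (v := fun t => y t + m * (z t - m * ε) + ε)
    (fun t => (((hx t).sub (hz t)).add_const _).congr_deriv (by ring))
    (fun t => (((hy t).add (((hz t).sub_const _).const_mul m)).add_const _).congr_deriv (by ring))
  have hDt : ∀ t, D t =
      ϑ ^ 2 * Real.exp (-m * t) * (1 + m / 2 * Real.cos (Real.sqrt (4 - m ^ 2) * t + φ)) :=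
    fun t => (hD t).trans (hsol t)
  refine ⟨ϑ, φ, hϑ, hDt, fun t => ?_⟩
  have hA : 0 ≤ m * (ϑ ^ 2 * Real.exp (-m * t)) := by positivity
  have hcos₁ := Real.neg_one_le_cos (Real.sqrt (4 - m ^ 2) * t + φ)
  have hcos₂ := Real.cos_le_one (Real.sqrt (4 - m ^ 2) * t + φ)
  rw [hDt t]
  constructor <;> nlinarith [mul_nonneg hA (by linarith : (0 : ℝ) ≤ 1 + Real.cos _),
    mul_nonneg hA (by linarith : (0 : ℝ) ≤ 1 - Real.cos (Real.sqrt (4 - m ^ 2) * t + φ))]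
end

section
/- Let 0 < k < 2, m > 0 and ε > 0, and set ϑ = 2·(m + k)·ε/√(4 − k²). Suppose t_d ∈ ℝ satisfies (1 − k/2)·ϑ²·e^{k·t_d} ≤ 1 ≤ (1 + k/2)·ϑ²·e^{k·t_d}. Then the quantity z_d = ε·t_d + m·ε satisfies −(2ε/k)·ln( √(1 + k/2) · 2(m + k)ε/√(4 − k²) ) + m·ε ≤ z_d ≤ −(2ε/k)·ln( √(1 − k/2) · 2(m + k)ε/√(4 − k²) ) + m·ε. In particular z_d ≥ −(2ε/k)·ln( 2√2·(m + k)·ε/√(4 − k²) ) + m·ε. -/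
/-- bounds on the maximal delay `z_d = ε·t_d + m·ε` of the slow passage
through the Hopf-like bifurcation in the two-region PWL system (Theorem 2.3). -/
theorem stmt7 (k m ε ϑ t_d z_d : ℝ)
    (hk0 : 0 < k) (hk2 : k < 2) (hm : 0 < m) (hε : 0 < ε)
    (hϑ : ϑ = 2 * (m + k) * ε / Real.sqrt (4 - k ^ 2))
    (h1 : (1 - k / 2) * ϑ ^ 2 * Real.exp (k * t_d) ≤ 1)
    (h2 : 1 ≤ (1 + k / 2) * ϑ ^ 2 * Real.exp (k * t_d))
    (hz : z_d = ε * t_d + m * ε) :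
    (-(2 * ε / k) * Real.log (Real.sqrt (1 + k / 2) * (2 * (m + k) * ε / Real.sqrt (4 - k ^ 2)))
        + m * ε ≤ z_d ∧
      z_d ≤ -(2 * ε / k) *
          Real.log (Real.sqrt (1 - k / 2) * (2 * (m + k) * ε / Real.sqrt (4 - k ^ 2)))
        + m * ε) ∧
    -(2 * ε / k) * Real.log (2 * Real.sqrt 2 * (m + k) * ε / Real.sqrt (4 - k ^ 2))
        + m * ε ≤ z_d := by
  have h4 : (0:ℝ) < 4 - k ^ 2 := by nlinarith
  have hs : 0 < Real.sqrt (4 - k ^ 2) := Real.sqrt_pos.mpr h4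
  have hϑpos : 0 < ϑ := by rw [hϑ]; positivity
  have ha : (0:ℝ) < 1 + k / 2 := by linarith
  have hb : (0:ℝ) < 1 - k / 2 := by linarith
  set la := Real.log (1 + k / 2) with hla
  set lb := Real.log (1 - k / 2) with hlb
  set lϑ := Real.log ϑ with hlϑ
  -- log of the products
  have hlog1 : Real.log ((1 - k / 2) * ϑ ^ 2 * Real.exp (k * t_d))
      = lb + 2 * lϑ + k * t_d := by
    rw [Real.log_mul (by positivity) (Real.exp_ne_zero _),
      Real.log_mul (ne_of_gt hb) (by positivity), Real.log_pow, Real.log_exp]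
    push_cast; ring
  have hlog2 : Real.log ((1 + k / 2) * ϑ ^ 2 * Real.exp (k * t_d))
      = la + 2 * lϑ + k * t_d := by
    rw [Real.log_mul (by positivity) (Real.exp_ne_zero _),
      Real.log_mul (ne_of_gt ha) (by positivity), Real.log_pow, Real.log_exp]
    push_cast; ring
  have ht1 : lb + 2 * lϑ + k * t_d ≤ 0 := by
    have := Real.log_le_log (by positivity) h1
    rwa [hlog1, Real.log_one] at this
  have ht2 : 0 ≤ la + 2 * lϑ + k * t_d := by
    have := Real.log_le_log one_pos h2
    rwa [hlog2, Real.log_one] at this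
  have hϑeq : 2 * (m + k) * ε / Real.sqrt (4 - k ^ 2) = ϑ := hϑ.symm
  have hlsa : Real.log (Real.sqrt (1 + k / 2) * (2 * (m + k) * ε / Real.sqrt (4 - k ^ 2)))
      = la / 2 + lϑ := by
    rw [hϑeq, Real.log_mul (by positivity) (ne_of_gt hϑpos), Real.log_sqrt ha.le]
  have hlsb : Real.log (Real.sqrt (1 - k / 2) * (2 * (m + k) * ε / Real.sqrt (4 - k ^ 2)))
      = lb / 2 + lϑ := by
    rw [hϑeq, Real.log_mul (by positivity) (ne_of_gt hϑpos), Real.log_sqrt hb.le]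
  have hcpos : 0 < 2 * ε / k := by positivity
  have heqa : -(2 * ε / k) * (la / 2 + lϑ)
      = ε * t_d - ε * (la + 2 * lϑ + k * t_d) / k := by
    field_simp; ring
  have heqb : -(2 * ε / k) * (lb / 2 + lϑ)
      = ε * t_d - ε * (lb + 2 * lϑ + k * t_d) / k := by
    field_simp; ring
  have hlow : -(2 * ε / k) * (la / 2 + lϑ) + m * ε ≤ z_d := by
    rw [hz, heqa]
    have : 0 ≤ ε * (la + 2 * lϑ + k * t_d) / k :=
      div_nonneg (mul_nonneg hε.le ht2) hk0.le
    linarith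
  have hhigh : z_d ≤ -(2 * ε / k) * (lb / 2 + lϑ) + m * ε := by
    rw [hz, heqb]
    have : ε * (lb + 2 * lϑ + k * t_d) / k ≤ 0 :=
      div_nonpos_of_nonpos_of_nonneg (mul_nonpos_of_nonneg_of_nonpos hε.le ht1) hk0.le
    linarith
  refine ⟨⟨by rw [hlsa]; exact hlow, by rw [hlsb]; exact hhigh⟩, ?_⟩
  -- weaker lower bound
  have h2v : 2 * Real.sqrt 2 * (m + k) * ε / Real.sqrt (4 - k ^ 2) = Real.sqrt 2 * ϑ := by
    rw [hϑ]; ring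
  have hsa : Real.sqrt (1 + k / 2) ≤ Real.sqrt 2 :=
    Real.sqrt_le_sqrt (by linarith)
  have hmono : Real.log (Real.sqrt (1 + k / 2) * ϑ) ≤ Real.log (Real.sqrt 2 * ϑ) :=
    Real.log_le_log (by positivity) (mul_le_mul_of_nonneg_right hsa hϑpos.le)
  have : -(2 * ε / k) * Real.log (Real.sqrt 2 * ϑ)
      ≤ -(2 * ε / k) * Real.log (Real.sqrt (1 + k / 2) * ϑ) :=
    mul_le_mul_of_nonpos_left hmono (by linarith)
  rw [h2v]
  have hlsa' : Real.log (Real.sqrt (1 + k / 2) * ϑ) = la / 2 + lϑ := by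
    rw [Real.log_mul (by positivity) (ne_of_gt hϑpos), Real.log_sqrt ha.le]
  rw [hlsa'] at this
  linarith [hlow, this]
end

section
/- Let ρ < 0 < μ and ε > 0. Set L = ln(−ρ/μ), A = √(L² + π²), and define m = (μ − ρ)/ε − k − A and k = −(1/(μ − ρ))·( 2·L·(ρ − μ)/A + (ρ/ε)·(μ − ρ − ε·A) ), and then l = (m·ρ + k·μ)/(μ − ρ), n = −ρ·μ·(k + m)/(μ − ρ), and t̂ = (μ − ρ)/ε − (k + m). Then t̂ = A > 0, l = (2/t̂)·L, and l² = 4·L²/(L² + π²) < 4; moreover the solution (x(t), y(t), z(t)) of the linear system x′ = l·x + n − y, y′ = x − z, z′ = ε with initial condition (x(0), y(0), z(0)) = (ρ, −m·ρ − ε, ρ + m·ε) satisfies (x(t̂), y(t̂), z(t̂)) = (μ, k·μ − ε, μ − k·ε). In addition, if m + l > 0 then x′(t) > 0 for all t ∈ [0, t̂], so x(t) ∈ [ρ, μ] on [0, t̂]. -/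
/-!
Put `a = L / A` and `ω = π / A`. Then `a ^ 2 + ω ^ 2 = 1` and `l = 2 a`, so the linear part of the
central system has eigenvalues `a ± i ω`, and the solution through the exit point of `S_ε^a` is
explicit: `x - (z + l ε)` is `(m + l) ε · e^{a t} ((a / ω) sin ω t - cos ω t)` and
`x' = ε + ((m + l) ε / ω) e^{a t} sin ω t`. At `t̂ = A` we have `ω t̂ = π` and `e^{a t̂} = -ρ / μ`,
which lands on the entry point of `S_ε^r`; for `t ∈ [0, t̂]` we have `sin ω t ≥ 0`, hence `x' > 0`
when `m + l > 0`. Uniqueness for linear ODEs identifies every solution with the explicit one.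
-/

open Real

theorem eq_of_hasDerivAt_affine {E : Type*} [NormedAddCommGroup E] [NormedSpace ℝ E]
    (L : E →L[ℝ] E) (c : ℝ → E) {f g : ℝ → E} {t₀ : ℝ}
    (hf : ∀ t, HasDerivAt f (L (f t) + c t) t) (hg : ∀ t, HasDerivAt g (L (g t) + c t) t)
    (h : f t₀ = g t₀) : f = g := by
  have hv : ∀ t, LipschitzWith ‖L‖₊ fun p => L p + c t := fun t => by
    simpa using L.lipschitz.add (LipschitzWith.const (c t))
  exact ODE_solution_unique_univ (s := fun _ => Set.univ) (fun t => (hv t).lipschitzOnWith)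
    (fun t => ⟨hf t, trivial⟩) (fun t => ⟨hg t, trivial⟩) h

theorem eq_add_mul_of_hasDerivAt_const {z : ℝ → ℝ} {c : ℝ} (hz : ∀ t, HasDerivAt z c t) (t : ℝ) :
    z t = z 0 + c * t := by
  have hline : ∀ t, HasDerivAt (fun t => z 0 + c * t) c t := fun t => by
    simpa using ((hasDerivAt_id t).const_mul c).const_add (z 0)
  have h := eq_of_hasDerivAt_affine (0 : ℝ →L[ℝ] ℝ) (fun _ => c) (g := fun t => z 0 + c * t)
    (t₀ := 0) (by simpa using hz) (by simpa using hline) (by simp)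
  exact congrFun h t

theorem centralSystem_unique {l n : ℝ} {z x y X Y : ℝ → ℝ}
    (hx : ∀ t, HasDerivAt x (l * x t + n - y t) t) (hy : ∀ t, HasDerivAt y (x t - z t) t)
    (hX : ∀ t, HasDerivAt X (l * X t + n - Y t) t) (hY : ∀ t, HasDerivAt Y (X t - z t) t)
    (h₀ : x 0 = X 0 ∧ y 0 = Y 0) : x = X ∧ y = Y := by
  let L : ℝ × ℝ →L[ℝ] ℝ × ℝ :=
    (l • ContinuousLinearMap.fst ℝ ℝ ℝ - ContinuousLinearMap.snd ℝ ℝ ℝ).prod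
      (ContinuousLinearMap.fst ℝ ℝ ℝ)
  have hpair : ∀ {u v : ℝ → ℝ}, (∀ t, HasDerivAt u (l * u t + n - v t) t) →
      (∀ t, HasDerivAt v (u t - z t) t) →
      ∀ t, HasDerivAt (fun t => (u t, v t)) (L (u t, v t) + (n, -z t)) t := by
    intro u v hu hv t
    refine ((hu t).prodMk (hv t)).congr_deriv ?_
    simp only [L, ContinuousLinearMap.prod_apply, sub_apply, smul_apply, smul_eq_mul,
      ContinuousLinearMap.coe_fst', ContinuousLinearMap.coe_snd', Prod.mk_add_mk]
    ext <;> ring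
  have h := eq_of_hasDerivAt_affine L _ (hpair hx hy) (hpair hX hY) (t₀ := 0) (by simp [h₀])
  exact ⟨funext fun t => congrArg Prod.fst (congrFun h t),
    funext fun t => congrArg Prod.snd (congrFun h t)⟩

theorem hasDerivAt_exp_mul_sin (a ω t : ℝ) :
    HasDerivAt (fun t => exp (a * t) * sin (ω * t))
      (exp (a * t) * (a * sin (ω * t) + ω * cos (ω * t))) t := by
  refine (((hasDerivAt_id' t).const_mul a).exp.mul
    ((hasDerivAt_id' t).const_mul ω).sin).congr_deriv ?_
  ring

theorem hasDerivAt_exp_mul_cos (a ω t : ℝ) :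
    HasDerivAt (fun t => exp (a * t) * cos (ω * t))
      (exp (a * t) * (a * cos (ω * t) - ω * sin (ω * t))) t := by
  refine (((hasDerivAt_id' t).const_mul a).exp.mul
    ((hasDerivAt_id' t).const_mul ω).cos).congr_deriv ?_
  ring

/-- The particular solution `z₀ + 2 a ε + ε t` plus `B` times a real solution of the homogeneous
system, whose eigenvalues are `a ± i ω` when `a ^ 2 + ω ^ 2 = 1`. -/
noncomputable def centralX (a ω ε z₀ B t : ℝ) : ℝ :=
  z₀ + 2 * a * ε + ε * t + B * (a / ω * (exp (a * t) * sin (ω * t)) - exp (a * t) * cos (ω * t))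

noncomputable def centralXDeriv (a ω ε B t : ℝ) : ℝ :=
  ε + B / ω * (exp (a * t) * sin (ω * t))

noncomputable def centralY (a ω n ε z₀ B t : ℝ) : ℝ :=
  2 * a * centralX a ω ε z₀ B t + n - centralXDeriv a ω ε B t

section CentralSolution

variable {a ω ε z₀ B T : ℝ}

theorem hasDerivAt_centralX (hω : ω ≠ 0) (haω : a ^ 2 + ω ^ 2 = 1) (t : ℝ) :
    HasDerivAt (centralX a ω ε z₀ B) (centralXDeriv a ω ε B t) t := by
  have h := (((hasDerivAt_id' t).const_mul ε).const_add (z₀ + 2 * a * ε)).fun_add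
    ((((hasDerivAt_exp_mul_sin a ω t).const_mul (a / ω)).fun_sub
      (hasDerivAt_exp_mul_cos a ω t)).const_mul B)
  refine h.congr_deriv ?_
  unfold centralXDeriv
  field_simp
  linear_combination B * exp (a * t) * sin (ω * t) * haω

theorem hasDerivAt_centralY (n : ℝ) (hω : ω ≠ 0) (haω : a ^ 2 + ω ^ 2 = 1) (t : ℝ) :
    HasDerivAt (centralY a ω n ε z₀ B) (centralX a ω ε z₀ B t - (z₀ + ε * t)) t := by
  have hX := hasDerivAt_centralX (ε := ε) (z₀ := z₀) (B := B) hω haω t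
  have h := ((hX.const_mul (2 * a)).add_const n).fun_sub
    (((hasDerivAt_exp_mul_sin a ω t).const_mul (B / ω)).const_add ε)
  refine h.congr_deriv ?_
  unfold centralX centralXDeriv
  field_simp
  ring

theorem centralX_of_mul_eq_pi (hT : ω * T = π) :
    centralX a ω ε z₀ B T = z₀ + 2 * a * ε + ε * T + B * exp (a * T) := by
  simp only [centralX, hT, sin_pi, cos_pi]
  ring

theorem centralXDeriv_of_mul_eq_pi (hT : ω * T = π) : centralXDeriv a ω ε B T = ε := by
  simp [centralXDeriv, hT]

theorem centralXDeriv_pos (hε : 0 < ε) (hB : 0 ≤ B) (hω : 0 < ω) (hT : ω * T = π)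
    {t : ℝ} (ht : t ∈ Set.Icc 0 T) : 0 < centralXDeriv a ω ε B t := by
  have hsin : 0 ≤ sin (ω * t) := sin_nonneg_of_nonneg_of_le_pi (by nlinarith [ht.1])
    (hT ▸ mul_le_mul_of_nonneg_left ht.2 hω.le)
  unfold centralXDeriv
  positivity

theorem centralX_monotoneOn (hε : 0 < ε) (hB : 0 ≤ B) (hω : 0 < ω)
    (haω : a ^ 2 + ω ^ 2 = 1) (hT : ω * T = π) :
    MonotoneOn (centralX a ω ε z₀ B) (Set.Icc 0 T) := by
  have hX := hasDerivAt_centralX (ε := ε) (z₀ := z₀) (B := B) hω.ne' haω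
  refine monotoneOn_of_hasDerivWithinAt_nonneg (convex_Icc 0 T)
    (fun t _ => (hX t).continuousAt.continuousWithinAt) (fun t _ => (hX t).hasDerivWithinAt)
    fun t ht => (centralXDeriv_pos hε hB hω hT (interior_subset ht)).le

end CentralSolution

theorem centralSystem_eq_explicit {a ω l m n ε ρ : ℝ} (hω : ω ≠ 0) (haω : a ^ 2 + ω ^ 2 = 1)
    (hl : l = 2 * a) (hentry : (l + m) * ρ + n = 0) {x y z : ℝ → ℝ}
    (hx : ∀ t, HasDerivAt x (l * x t + n - y t) t) (hy : ∀ t, HasDerivAt y (x t - z t) t)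
    (hz : ∀ t, HasDerivAt z ε t) (hx0 : x 0 = ρ) (hy0 : y 0 = -m * ρ - ε)
    (hz0 : z 0 = ρ + m * ε) :
    x = centralX a ω ε (ρ + m * ε) ((m + l) * ε) ∧
      y = centralY a ω n ε (ρ + m * ε) ((m + l) * ε) ∧ ∀ t, z t = ρ + m * ε + ε * t := by
  have hz' : ∀ t, z t = ρ + m * ε + ε * t := fun t => by
    rw [eq_add_mul_of_hasDerivAt_const hz t, hz0]
  subst hl
  have hX0 : centralX a ω ε (ρ + m * ε) ((m + 2 * a) * ε) 0 = ρ := by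
    simp only [centralX, mul_zero, exp_zero, sin_zero, cos_zero]; ring
  obtain ⟨hxX, hyY⟩ := centralSystem_unique (X := centralX a ω ε (ρ + m * ε) ((m + 2 * a) * ε))
    (Y := centralY a ω n ε (ρ + m * ε) ((m + 2 * a) * ε)) hx hy
    (fun t => (hasDerivAt_centralX hω haω t).congr_deriv (by unfold centralY; ring))
    (fun t => by rw [hz' t]; exact hasDerivAt_centralY n hω haω t)
    ⟨by rw [hx0, hX0], by
      simp only [centralY, centralXDeriv, hX0, hy0, mul_zero, exp_zero, sin_zero]
      linear_combination -hentry⟩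
  exact ⟨hxX, hyY, hz'⟩

theorem centralSystem_connects_slowManifolds {ρ μ ε a ω T l m k n : ℝ} (hμ : 0 < μ) (hε : 0 < ε)
    (hω : 0 < ω) (haω : a ^ 2 + ω ^ 2 = 1) (hl : l = 2 * a) (hωT : ω * T = π)
    (hexp : exp (a * T) = -ρ / μ) (hslope : l * (μ - ρ) = m * ρ + k * μ)
    (hentry : (l + m) * ρ + n = 0)     (hflight : ε * T = μ - ρ - (k + m) * ε) {x y z : ℝ → ℝ}
    (hx : ∀ t, HasDerivAt x (l * x t + n - y t) t) (hy : ∀ t, HasDerivAt y (x t - z t) t)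
    (hz : ∀ t, HasDerivAt z ε t) (hx0 : x 0 = ρ) (hy0 : y 0 = -m * ρ - ε)
    (hz0 : z 0 = ρ + m * ε) :
    (x T = μ ∧ y T = k * μ - ε ∧ z T = μ - k * ε) ∧
      (0 < m + l → ∀ t ∈ Set.Icc (0 : ℝ) T, 0 < l * x t + n - y t ∧ x t ∈ Set.Icc ρ μ) := by
  obtain ⟨rfl, rfl, hzt⟩ :=
    centralSystem_eq_explicit hω.ne' haω hl hentry hx hy hz hx0 hy0 hz0
  subst hl
  have hT0 : 0 ≤ T := by nlinarith [pi_pos]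
  have hxT : centralX a ω ε (ρ + m * ε) ((m + 2 * a) * ε) T = μ := by
    rw [centralX_of_mul_eq_pi hωT, hexp]
    field_simp
    linear_combination μ * hflight + ε * hslope
  have hyT : centralY a ω n ε (ρ + m * ε) ((m + 2 * a) * ε) T = k * μ - ε := by
    rw [centralY, hxT, centralXDeriv_of_mul_eq_pi hωT]
    linear_combination hslope + hentry
  refine ⟨⟨hxT, hyT, by rw [hzt]; linear_combination hflight⟩, fun hml t ht => ?_⟩
  have hB : 0 ≤ (m + 2 * a) * ε := by positivity
  have hmono := centralX_monotoneOn (z₀ := ρ + m * ε) hε hB hω haω hωT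
  refine ⟨by simpa [centralY] using centralXDeriv_pos hε hB hω hωT ht, ?_, ?_⟩
  · simpa [hx0] using hmono (Set.left_mem_Icc.2 hT0) ht ht.1
  · simpa [hxT] using hmono ht (Set.right_mem_Icc.2 hT0) ht.2

/-- Lemma 3.1: with the stated choices of `k`, `m`, `l`, `n` and the
central flight time `t̂`, the solution of the central-region linear system starting
at the exit point of the attracting slow manifold reaches the entry point of the
repelling slow manifold at time `t̂`, and (if `m + l > 0`) `x` is increasing on
`[0, t̂]`, staying in `[ρ, μ]`. -/
theorem stmt9 (ρ μ ε L A m k l n th : ℝ)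
    (hρ : ρ < 0) (hμ : 0 < μ) (hε : 0 < ε)
    (hL : L = Real.log (-ρ / μ))
    (hA : A = Real.sqrt (L ^ 2 + Real.pi ^ 2))
    (hk : k = -(1 / (μ - ρ)) * (2 * L * (ρ - μ) / A + (ρ / ε) * (μ - ρ - ε * A)))
    (hm : m = (μ - ρ) / ε - k - A)
    (hl : l = (m * ρ + k * μ) / (μ - ρ))
    (hn : n = -ρ * μ * (k + m) / (μ - ρ))
    (hth : th = (μ - ρ) / ε - (k + m)) :
    th = A ∧ 0 < th ∧ l = (2 / th) * L ∧
    l ^ 2 = 4 * L ^ 2 / (L ^ 2 + Real.pi ^ 2) ∧ l ^ 2 < 4 ∧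
    ∀ x y z : ℝ → ℝ,
      (∀ t, HasDerivAt x (l * x t + n - y t) t) →
      (∀ t, HasDerivAt y (x t - z t) t) →
      (∀ t, HasDerivAt z ε t) →
      x 0 = ρ → y 0 = -m * ρ - ε → z 0 = ρ + m * ε →
      (x th = μ ∧ y th = k * μ - ε ∧ z th = μ - k * ε) ∧
      (0 < m + l → ∀ t ∈ Set.Icc (0 : ℝ) th,
        0 < l * x t + n - y t ∧ x t ∈ Set.Icc ρ μ) := by
  have hμρ : μ - ρ ≠ 0 := by linarith
  have hA0 : 0 < A := hA ▸ by positivity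
  have hA2 : A ^ 2 = L ^ 2 + π ^ 2 := hA ▸ sq_sqrt (by positivity)
  have hthA : th = A := by rw [hth, hm]; ring
  have hlA : l = 2 * L / A := by rw [hl, hm, hk]; field_simp; ring
  have hlsq : l ^ 2 = 4 * L ^ 2 / (L ^ 2 + π ^ 2) := by rw [hlA, div_pow, hA2]; ring
  rw [hthA]
  refine ⟨rfl, hA0, by rw [hlA]; ring, hlsq, ?_, fun x y z hx hy hz hx0 hy0 hz0 => ?_⟩
  · rw [hlsq, div_lt_iff₀ (by positivity)]
    nlinarith [pi_pos]
  refine centralSystem_connects_slowManifolds (a := L / A) (ω := π / A) hμ hε (by positivity)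
    ?_ ?_ ?_ ?_ ?_ ?_ ?_ hx hy hz hx0 hy0 hz0
  · field_simp; linarith
  · rw [hlA]; ring
  · field_simp
  · rw [div_mul_cancel₀ _ hA0.ne', hL, exp_log (div_pos (neg_pos.2 hρ) hμ)]
  · rw [hl]; field_simp
  · rw [hl, hn]; field_simp; ring
  · rw [hm]; field_simp; ring
end

section
/- Let ρ < 0 < μ, let l be real with −2 < l < 2, set ξ_l = √(4 − l²)/2, and let t̂ > 0. Then the pair of equations e^{(l/2)·t̂}·cos(ξ_l·t̂) = ρ/μ and e^{(l/2)·t̂}·sin(ξ_l·t̂) = 0 holds if and only if l = (2/t̂)·ln(−ρ/μ) and there exists an integer q ≥ 0 such that ξ_l·t̂ = π + 2π·q. -/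
/-- the boundary condition for the connection of the slow manifolds
through the central region holds iff `l = (2/t̂)·ln(-ρ/μ)` and `ξ_l·t̂` is an odd
multiple `π + 2πq` (`q ≥ 0`) of `π`. -/
theorem stmt10 (ρ μ l th ξ : ℝ)
    (hρ : ρ < 0) (hμ : 0 < μ) (hl1 : -2 < l) (hl2 : l < 2)
    (hξ : ξ = Real.sqrt (4 - l ^ 2) / 2) (hth : 0 < th) :
    (Real.exp ((l / 2) * th) * Real.cos (ξ * th) = ρ / μ ∧
      Real.exp ((l / 2) * th) * Real.sin (ξ * th) = 0) ↔
    (l = (2 / th) * Real.log (-ρ / μ) ∧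
      ∃ q : ℤ, 0 ≤ q ∧ ξ * th = Real.pi + 2 * Real.pi * q) := by
  have hsq : 0 < 4 - l ^ 2 := by nlinarith
  have hξpos : 0 < ξ := by
    rw [hξ]
    exact div_pos (Real.sqrt_pos.mpr hsq) two_pos
  have hpos : 0 < -ρ / μ := div_pos (neg_pos.mpr hρ) hμ
  have hexp : 0 < Real.exp ((l / 2) * th) := Real.exp_pos _
  constructor
  · rintro ⟨h1, h2⟩
    have hsin : Real.sin (ξ * th) = 0 := by
      rcases mul_eq_zero.mp h2 with h | h
      · exact absurd h hexp.ne'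
      · exact h
    obtain ⟨k, hk⟩ := Real.sin_eq_zero_iff.mp hsin
    have hcosneg : Real.cos (ξ * th) < 0 := by
      have : ρ / μ < 0 := div_neg_of_neg_of_pos hρ hμ
      nlinarith
    -- k is odd
    have hπ := Real.pi_pos
    have hkpos : 0 < k := by
      by_contra h
      push_neg at h
      have : (k : ℝ) * Real.pi ≤ 0 :=
        mul_nonpos_of_nonpos_of_nonneg (by exact_mod_cast h) hπ.le
      nlinarith [mul_pos hξpos hth]
    have hkodd : Odd k := by
      rcases Int.even_or_odd k with he | ho
      · exfalso
        obtain ⟨m, hm⟩ := he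
        have : Real.cos (ξ * th) = 1 := by
          rw [← hk, hm]
          push_cast
          have : ((m : ℝ) + m) * Real.pi = (m : ℝ) * (2 * Real.pi) := by ring
          rw [this, Real.cos_int_mul_two_pi]
        linarith
      · exact ho
    obtain ⟨q, hq⟩ := hkodd
    have hq0 : 0 ≤ q := by omega
    have hxt : ξ * th = Real.pi + 2 * Real.pi * q := by
      rw [← hk, hq]; push_cast; ring
    have hcos : Real.cos (ξ * th) = -1 := by
      rw [hxt]
      have : Real.pi + 2 * Real.pi * (q : ℝ) = (q : ℝ) * (2 * Real.pi) + Real.pi := by ring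
      rw [this, Real.cos_int_mul_two_pi_add_pi]
    have hexpval : Real.exp ((l / 2) * th) = -ρ / μ := by
      rw [hcos] at h1
      field_simp at h1 ⊢
      linarith
    have hlog : (l / 2) * th = Real.log (-ρ / μ) := by
      rw [← hexpval, Real.log_exp]
    constructor
    · field_simp at hlog ⊢
      linarith
    · exact ⟨q, hq0, hxt⟩
  · rintro ⟨hl, q, hq0, hxt⟩
    have hexpval : Real.exp ((l / 2) * th) = -ρ / μ := by
      have : (l / 2) * th = Real.log (-ρ / μ) := by
        rw [hl]; field_simp
      rw [this, Real.exp_log hpos]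
    have hcos : Real.cos (ξ * th) = -1 := by
      rw [hxt]
      have : Real.pi + 2 * Real.pi * (q : ℝ) = (q : ℝ) * (2 * Real.pi) + Real.pi := by ring
      rw [this, Real.cos_int_mul_two_pi_add_pi]
    have hsin : Real.sin (ξ * th) = 0 := by
      rw [hxt]
      have : Real.pi + 2 * Real.pi * (q : ℝ) = Real.pi + (q : ℝ) * (2 * Real.pi) := by ring
      rw [this, Real.sin_add_int_mul_two_pi, Real.sin_pi]
    refine ⟨?_, by rw [hsin, mul_zero]⟩
    rw [hexpval, hcos]
    field_simp
end

section
/- Let a, b be real and let η > 0 and ε > 0. For a real parameter c define q_c(λ) = (c − λ)·(λ + η·a)·(λ + ε·b) − η·(λ + ε·b) − ε·(λ + η·a). If some real λ satisfies both q_{−1}(λ) = 0 and q_{1}(λ) = 0, then ε·b = η·a. -/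
/-- key step of Lemma 4.1: if the characteristic polynomials of the
left (`c = -1`) and middle (`c = 1`) regions of the Doi–Kumagai model share a
common real root, then `ε·b = η·a`. -/
theorem stmt16 (a b η ε : ℝ) (hη : 0 < η) (hε : 0 < ε)
    (q : ℝ → ℝ → ℝ)
    (hq : ∀ c lam : ℝ, q c lam =
      (c - lam) * (lam + η * a) * (lam + ε * b) - η * (lam + ε * b) - ε * (lam + η * a))
    (lam : ℝ) (h1 : q (-1) lam = 0) (h2 : q 1 lam = 0) :
    ε * b = η * a := by
  rw [hq] at h1 h2
  have hdiff : (lam + η * a) * (lam + ε * b) = 0 := by nlinarith [h1, h2]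
  rcases mul_eq_zero.1 hdiff with h | h
  · rw [h] at h1
    have : η * (lam + ε * b) = 0 := by nlinarith [h1]
    have hb : lam + ε * b = 0 := by
      rcases mul_eq_zero.1 this with h' | h'
      · exact absurd h' (ne_of_gt hη)
      · exact h'
    linarith
  · rw [h] at h1
    have : ε * (lam + η * a) = 0 := by nlinarith [h1]
    have ha : lam + η * a = 0 := by
      rcases mul_eq_zero.1 this with h' | h'
      · exact absurd h' (ne_of_gt hε)
      · exact h'
    linarith
end

section
/- Let a, b, η, ε, λ_L, λ_M be real numbers with a ≠ 0, b ≠ 0, λ_L + η·a ≠ 0, λ_M + η·a ≠ 0, λ_L + ε·b ≠ 0 and λ_M + ε·b ≠ 0. Consider the linear system in the unknowns (X_L, X_M): X_L/a − (1 + X_L)·η/(λ_L + η·a) = X_M/a − (1 + X_M)·η/(λ_M + η·a), X_L/b − (1 + X_L)·ε/(λ_L + ε·b) = X_M/b − (1 + X_M)·ε/(λ_M + ε·b). Then: (i) (X_L, X_M) = (−1, −1) is a solution; (ii) the determinant of the coefficient matrix of the system equals −λ_L·λ_M·(λ_M − λ_L)·(ε·b − η·a) / ( a·b·(λ_L + η·a)·(λ_M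 + η·a)·(λ_L + ε·b)·(λ_M + ε·b) ); (iii) if moreover λ_L ≠ 0, λ_M ≠ 0, λ_L ≠ λ_M and ε·b ≠ η·a, then (−1, −1) is the unique solution. -/
/-!
Substituting `Y = 1 + X` turns the system into the homogeneous linear system `Λ (Y_L, Y_M) = 0`,
because `X / c - (1 + X) k / l = (1 + X) (1 / c - k / l) - 1 / c` and the constant `-1 / c` is the
same on both sides. Hence `(-1, -1)` is always a solution, and it is the only one as soon as
`det Λ ≠ 0`. The determinant is computed from `1 / c - k / (l + k c) = l / (c (l + k c))`.
-/

open Matrix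

section
variable {K : Type*} [Field K]

theorem one_div_sub_div_add_mul {c k l : K} (hc : c ≠ 0) (h : l + k * c ≠ 0) :
    1 / c - k / (l + k * c) = l / (c * (l + k * c)) := by
  rw [div_sub_div _ _ hc h]
  congr 1
  ring

theorem div_sub_one_add_mul_div (c k l x : K) :
    x / c - (1 + x) * k / l = (1 + x) * (1 / c - k / l) - 1 / c := by
  ring

theorem mulVec_of_neg_right_eq_zero_iff (p q r s y z : K) :
    !![p, -q; r, -s] *ᵥ ![y, z] = 0 ↔ y * p = z * q ∧ y * r = z * s := by
  simp [funext_iff, Fin.forall_fin_two, ← sub_eq_add_neg, sub_eq_zero, mul_comm]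

end

/-- system (4.4) of Lemma 4.1 for the Doi–Kumagai model:
`(X_L, X_M) = (-1, -1)` solves the connection system, the determinant of its
coefficient matrix has the stated value, and in the nondegenerate case the
solution is unique. -/
theorem stmt17 (a b η ε lamL lamM : ℝ)
    (ha : a ≠ 0) (hb : b ≠ 0)
    (hLa : lamL + η * a ≠ 0) (hMa : lamM + η * a ≠ 0)
    (hLb : lamL + ε * b ≠ 0) (hMb : lamM + ε * b ≠ 0)
    (Sol : ℝ → ℝ → Prop)
    (hSol : ∀ XL XM : ℝ, Sol XL XM ↔
      (XL / a - (1 + XL) * η / (lamL + η * a) = XM / a - (1 + XM) * η / (lamM + η * a) ∧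
        XL / b - (1 + XL) * ε / (lamL + ε * b) = XM / b - (1 + XM) * ε / (lamM + ε * b)))
    (Λ : Matrix (Fin 2) (Fin 2) ℝ)
    (hΛ : Λ = !![1 / a - η / (lamL + η * a), -(1 / a - η / (lamM + η * a));
                 1 / b - ε / (lamL + ε * b), -(1 / b - ε / (lamM + ε * b))]) :
    Sol (-1) (-1) ∧
    Λ.det = -lamL * lamM * (lamM - lamL) * (ε * b - η * a) /
      (a * b * (lamL + η * a) * (lamM + η * a) * (lamL + ε * b) * (lamM + ε * b)) ∧
    (lamL ≠ 0 → lamM ≠ 0 → lamL ≠ lamM → ε * b ≠ η * a →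
      ∀ XL XM : ℝ, Sol XL XM → XL = -1 ∧ XM = -1) := by
  have hsol : ∀ XL XM, Sol XL XM ↔ Λ *ᵥ ![1 + XL, 1 + XM] = 0 := by
    intro XL XM
    simp only [hSol, hΛ, mulVec_of_neg_right_eq_zero_iff, div_sub_one_add_mul_div, sub_left_inj]
  have hdet : Λ.det = -lamL * lamM * (lamM - lamL) * (ε * b - η * a) /
      (a * b * (lamL + η * a) * (lamM + η * a) * (lamL + ε * b) * (lamM + ε * b)) := by
    rw [hΛ, det_fin_two_of, one_div_sub_div_add_mul ha hLa, one_div_sub_div_add_mul ha hMa,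
      one_div_sub_div_add_mul hb hLb, one_div_sub_div_add_mul hb hMb, mul_neg, neg_mul,
      div_mul_div_comm, div_mul_div_comm, sub_neg_eq_add, neg_div',
      div_add_div _ _ (by simp [*]) (by simp [*]), div_eq_div_iff (by simp [*]) (by simp [*])]
    ring
  refine ⟨by simp [hsol], hdet, fun hL hM hLM hεη XL XM h ↦ ?_⟩
  have hdet0 : Λ.det ≠ 0 := by
    rw [hdet]
    simp [*, sub_ne_zero.2 hLM.symm, sub_ne_zero.2 hεη]
  have hY : ![1 + XL, 1 + XM] = 0 := eq_zero_of_mulVec_eq_zero hdet0 ((hsol XL XM).1 h)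
  simpa [funext_iff, Fin.forall_fin_two, add_eq_zero_iff_eq_neg'] using hY
end
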